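/- arXiv:math/0104017 — 5 statements merged into one kernel-verified Lean document; each statement's English description precedes it below -/
import Mathlib

section
/- Let p be an odd prime. Let L be a finitely generated ℤ-module whose torsion submodule is finite of order coprime to p, and let b be a symmetric ℤ-bilinear form on L (such a form necessarily vanishes on torsion elements) whose induced form on the free quotient L/torsion is unimodular. Let N ⊆ L be a submodule of finite index in L, with this index coprime to p. If D ∈ L satisfies p ∣ b(D, n) for every n ∈ N, then D is p-divisible in L, i.e. D = p • E for some E ∈ L. -/
/-!
The form pairs `D` with all of `L` into `pℤ`: multiplying by the index, which is prime to `p`,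
moves any element of `L` into `N`. Unimodularity then identifies the functional `b(D, ·) / p`
with `b(E, ·)` on the free quotient, so `D - p • E` is torsion, and torsion elements are
`p`-divisible because the torsion order is prime to `p`.
-/

theorem LinearMap.exists_eq_mul_of_forall_dvd {M : Type*} [AddCommGroup M] [Module ℤ M]
    (f : M →ₗ[ℤ] ℤ) (n : ℤ) (hf : ∀ x, n ∣ f x) : ∃ g : M →ₗ[ℤ] ℤ, ∀ x, f x = n * g x :=
  ⟨{ toFun := fun x => f x / n
     map_add' := fun x y => by rw [map_add, Int.add_ediv_of_dvd_left (hf x)]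
     map_smul' := fun c x => by
       rw [f.map_smul, smul_eq_mul, smul_eq_mul, RingHom.id_apply, Int.mul_ediv_assoc c (hf x)] },
    fun x => (Int.mul_ediv_cancel' (hf x)).symm⟩

theorem LinearMap.exists_eq_zsmul_of_bijective_of_forall_dvd {M : Type*} [AddCommGroup M]
    [Module ℤ M] (B : M →ₗ[ℤ] M →ₗ[ℤ] ℤ) (hB : Function.Bijective B) (n : ℤ) (x : M)
    (hx : ∀ y, n ∣ B x y) : ∃ e : M, x = n • e := by
  obtain ⟨g, hg⟩ := (B x).exists_eq_mul_of_forall_dvd n hx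
  obtain ⟨e, rfl⟩ := hB.2 g
  refine ⟨e, hB.1 (LinearMap.ext fun y => ?_)⟩
  rw [map_zsmul, LinearMap.smul_apply, hg, smul_eq_mul]

theorem AddSubgroup.int_dvd_of_forall_mem_dvd {G : Type*} [AddCommGroup G] (H : AddSubgroup G)
    {p : ℕ} (hp : p.Coprime H.index) (f : G →+ ℤ) (hf : ∀ h ∈ H, (p : ℤ) ∣ f h) (x : G) :
    (p : ℤ) ∣ f x := by
  have hpx : (p : ℤ) ∣ H.index * f x := by
    simpa only [map_nsmul, nsmul_eq_mul] using hf _ (H.nsmul_index_mem x)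
  exact (Int.isCoprime_iff_gcd_eq_one.mpr (by exact_mod_cast hp)).dvd_of_dvd_mul_left hpx

theorem AddSubgroup.exists_eq_zsmul_of_coprime_card {G : Type*} [AddGroup G] (H : AddSubgroup G)
    {p : ℕ} (hp : p.Coprime (Nat.card H)) {t : G} (ht : t ∈ H) : ∃ s : G, t = (p : ℤ) • s := by
  obtain ⟨s, hs⟩ := (Nat.Coprime.nsmul_right_bijective hp.symm).2 ⟨t, ht⟩
  exact ⟨s, by rw [natCast_zsmul]; exact congrArg Subtype.val hs.symm⟩

theorem stmt_0_general (p : ℕ)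
    (L : Type*) [AddCommGroup L] [Module ℤ L]
    (htor : Nat.Coprime p (Nat.card (Submodule.torsion ℤ L)))
    (b : L →ₗ[ℤ] L →ₗ[ℤ] ℤ)
    (bbar : (L ⧸ Submodule.torsion ℤ L) →ₗ[ℤ] (L ⧸ Submodule.torsion ℤ L) →ₗ[ℤ] ℤ)
    (hcompat : ∀ x y : L,
      bbar (Submodule.Quotient.mk x) (Submodule.Quotient.mk y) = b x y)
    (hunimod : Function.Bijective
      (bbar : (L ⧸ Submodule.torsion ℤ L) → (L ⧸ Submodule.torsion ℤ L) →ₗ[ℤ] ℤ))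
    (N : Submodule ℤ L) (hN : Nat.Coprime p N.toAddSubgroup.index)
    (D : L) (hD : ∀ n ∈ N, (p : ℤ) ∣ b D n) :
    ∃ E : L, D = (p : ℤ) • E := by
  have hDL : ∀ x, (p : ℤ) ∣ b D x :=
    N.toAddSubgroup.int_dvd_of_forall_mem_dvd hN (b D).toAddMonoidHom hD
  obtain ⟨Ebar, hEbar⟩ := bbar.exists_eq_zsmul_of_bijective_of_forall_dvd hunimod p
    (Submodule.Quotient.mk D) fun y => by
      obtain ⟨x, rfl⟩ := Submodule.Quotient.mk_surjective _ y
      rw [hcompat]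
      exact hDL x
  obtain ⟨E, rfl⟩ := Submodule.Quotient.mk_surjective _ Ebar
  have htorsion : D - (p : ℤ) • E ∈ Submodule.torsion ℤ L := by
    rw [← Submodule.Quotient.mk_eq_zero, Submodule.Quotient.mk_sub, Submodule.Quotient.mk_smul,
      hEbar, sub_self]
  obtain ⟨s, hs⟩ :=
    (Submodule.torsion ℤ L).toAddSubgroup.exists_eq_zsmul_of_coprime_card htor htorsion
  exact ⟨E + s, by rw [zsmul_add, ← hs, add_sub_cancel]⟩

/-- Lemma 3.3 of the paper: let `p` be an odd prime, `L` a finitely generated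
`ℤ`-module whose torsion submodule is finite of order coprime to `p`, and `b` a
symmetric bilinear form on `L` whose induced form `bbar` on the free quotient
`L ⧸ torsion` is unimodular. If `N ⊆ L` has finite index coprime to `p` and
`D ∈ L` pairs with every element of `N` into a multiple of `p`, then `D` is
`p`-divisible in `L`. -/
theorem stmt_0 (p : ℕ) (hp : p.Prime) (hodd : Odd p)
    (L : Type*) [AddCommGroup L] [Module ℤ L] [Module.Finite ℤ L]
    (htor : Nat.Coprime p (Nat.card (Submodule.torsion ℤ L)))
    (b : L →ₗ[ℤ] L →ₗ[ℤ] ℤ) (hsymm : ∀ x y : L, b x y = b y x)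
    (bbar : (L ⧸ Submodule.torsion ℤ L) →ₗ[ℤ] (L ⧸ Submodule.torsion ℤ L) →ₗ[ℤ] ℤ)
    (hcompat : ∀ x y : L,
      bbar (Submodule.Quotient.mk x) (Submodule.Quotient.mk y) = b x y)
    (hunimod : Function.Bijective
      (bbar : (L ⧸ Submodule.torsion ℤ L) → (L ⧸ Submodule.torsion ℤ L) →ₗ[ℤ] ℤ))
    (N : Submodule ℤ L) (hN : Nat.Coprime p N.toAddSubgroup.index)
    (D : L) (hD : ∀ n ∈ N, (p : ℤ) ∣ b D n) :
    ∃ E : L, D = (p : ℤ) • E :=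
  stmt_0_general p L htor b bbar hcompat hunimod N hN D hD
end

section
/- Every subset of (ZMod 2)⁴ with at least 12 elements contains an affine hyperplane. -/
/-!
The complement `T` of `S` has at most `4` points, so its vector span (spanned by the
differences `t - t₀`) has dimension at most `3` and lies in the kernel of a nonzero linear
functional `f`. Then `f` is constant, say `c`, on `T`, and the parallel hyperplane
`{f = c + 1}` avoids `T`, i.e. lies in `S`.
-/

/-- An affine hyperplane of the vector space `(ZMod 2)⁴` is a level set
`{x | f x = c}` of a nonzero linear functional `f`. -/
def IsAffineHyperplane (H : Set (Fin 4 → ZMod 2)) : Prop :=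
  ∃ (f : (Fin 4 → ZMod 2) →ₗ[ZMod 2] ZMod 2) (c : ZMod 2), f ≠ 0 ∧ H = {x | f x = c}

open Module

section

variable {K V : Type*} [Field K] [AddCommGroup V] [Module K V]

theorem vectorSpan_lt_top_of_ncard_le_finrank [FiniteDimensional K V] {T : Set V}
    (hfin : T.Finite) (hT : T.ncard ≤ finrank K V) (hpos : 0 < finrank K V) :
    vectorSpan K T < ⊤ := by
  rcases T.eq_empty_or_nonempty with rfl | hne
  · have : Nontrivial V := finrank_pos_iff.mp hpos
    simp [vectorSpan_empty]
  · have : Fintype T := hfin.fintype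
    have : Nonempty T := hne.to_subtype
    have hspan := finrank_vectorSpan_range_add_one_le K ((↑) : T → V)
    rw [Subtype.range_coe, ← Nat.card_eq_fintype_card, Nat.card_coe_set_eq] at hspan
    exact Submodule.lt_top_of_finrank_lt_finrank (by omega)

theorem exists_dual_ne_zero_subset_levelSet_of_vectorSpan_lt_top {T : Set V}
    (hT : vectorSpan K T < ⊤) : ∃ (f : V →ₗ[K] K) (c : K), f ≠ 0 ∧ T ⊆ {x | f x = c} := by
  obtain ⟨f, hf, hker⟩ := (vectorSpan K T).exists_le_ker_of_lt_top hT
  rcases T.eq_empty_or_nonempty with rfl | ⟨t₀, ht₀⟩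
  · exact ⟨f, 0, hf, Set.empty_subset _⟩
  refine ⟨f, f t₀, hf, fun t ht => ?_⟩
  have hdiff : f (t - t₀) = 0 := hker (vsub_mem_vectorSpan K ht ht₀)
  rwa [map_sub, sub_eq_zero] at hdiff

end

/-- Every subset of `(ZMod 2)⁴` with at least 12 elements contains an affine
hyperplane. -/
theorem stmt_4 (S : Set (Fin 4 → ZMod 2)) (hS : 12 ≤ S.ncard) :
    ∃ H : Set (Fin 4 → ZMod 2), IsAffineHyperplane H ∧ H ⊆ S := by
  have hfinrank : finrank (ZMod 2) (Fin 4 → ZMod 2) = 4 := by simp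
  have hcompl : Sᶜ.ncard ≤ finrank (ZMod 2) (Fin 4 → ZMod 2) := by
    have hsum := Set.ncard_add_ncard_compl S
    simp only [Nat.card_eq_fintype_card, Fintype.card_pi, ZMod.card, Finset.prod_const,
      Finset.card_univ, Fintype.card_fin] at hsum
    omega
  obtain ⟨f, c, hf, hcompl_sub⟩ := exists_dual_ne_zero_subset_levelSet_of_vectorSpan_lt_top
    (vectorSpan_lt_top_of_ncard_le_finrank Sᶜ.toFinite hcompl (by omega))
  refine ⟨{x | f x = c + 1}, ⟨f, c + 1, hf, rfl⟩, fun x hx => ?_⟩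
  by_contra hxS
  exact one_ne_zero (add_eq_left.mp (hx.symm.trans (hcompl_sub hxS)))
end

section
/- There exists a subset of (ZMod 2)⁴ with exactly 11 elements that contains no affine hyperplane. -/
theorem LinearMap.exists_apply_single_ne_zero {R M ι : Type*} [Finite ι] [DecidableEq ι]
    [Semiring R] [AddCommMonoid M] [Module R M] {f : (ι → R) →ₗ[R] M} (hf : f ≠ 0) :
    ∃ i, f (Pi.single i 1) ≠ 0 := by
  by_contra! h
  exact hf <| (Pi.basisFun R ι).ext fun i ↦ by simpa using h i

theorem IsAffineHyperplane.zero_mem_or_exists_single_mem {H : Set (Fin 4 → ZMod 2)}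
    (hH : IsAffineHyperplane H) : 0 ∈ H ∨ ∃ i, Pi.single i 1 ∈ H := by
  obtain ⟨f, c, hf, rfl⟩ := hH
  obtain ⟨i, hi⟩ := f.exists_apply_single_ne_zero hf
  fin_cases c
  · exact Or.inl (map_zero f)
  · exact Or.inr ⟨i, (Fin.eq_one_of_ne_zero _ hi :)⟩

/-- There is an 11-element subset of `(ZMod 2)⁴` containing no affine hyperplane. -/
theorem stmt_5 :
    ∃ S : Set (Fin 4 → ZMod 2), S.ncard = 11 ∧
      ∀ H : Set (Fin 4 → ZMod 2), IsAffineHyperplane H → ¬ H ⊆ S := by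
  classical
  let frame : Finset (Fin 4 → ZMod 2) := insert 0 (Finset.univ.image fun i ↦ Pi.single i 1)
  refine ⟨↑frameᶜ, by rw [Set.ncard_coe_finset]; decide, fun H hH hsub ↦ ?_⟩
  have disjoint : ∀ x ∈ H, x ∉ frame := fun x hx ↦ Finset.mem_compl.mp (hsub hx)
  rcases hH.zero_mem_or_exists_single_mem with h0 | ⟨i, hi⟩
  · exact disjoint 0 h0 (Finset.mem_insert_self _ _)
  · exact disjoint _ hi (Finset.mem_insert_of_mem (Finset.mem_image_of_mem _ (Finset.mem_univ i)))
end

section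
/- There exists a subset of (ZMod 2)⁴ with exactly 12 elements that contains exactly one affine hyperplane. -/
theorem ZMod.eq_of_ne_of_ne_two {a b c : ZMod 2} (ha : a ≠ c) (hb : b ≠ c) : a = b := by
  revert a b c
  decide

theorem LinearMap.map_eq_zero_of_ne_of_add_ne {V : Type*} [AddCommGroup V] [Module (ZMod 2) V]
    (f : V →ₗ[ZMod 2] ZMod 2) {v w : V} {c : ZMod 2} (hv : f v ≠ c) (hvw : f (v + w) ≠ c) :
    f w = 0 := by
  simpa [map_add] using ZMod.eq_of_ne_of_ne_two hvw hv

def missedPoints : Finset (Fin 4 → ZMod 2) := {![1, 0, 1, 1], ![1, 1, 0, 1], ![1, 1, 1, 0], 1}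

def twelvePointSet : Set (Fin 4 → ZMod 2) := (↑missedPoints)ᶜ

theorem ncard_twelvePointSet : twelvePointSet.ncard = 12 := by
  rw [twelvePointSet, Set.ncard_compl, Set.ncard_coe_finset, Nat.card_eq_fintype_card]
  decide

theorem setOf_coord_zero_subset_twelvePointSet : {x | x 0 = 0} ⊆ twelvePointSet := by
  have hmissed : ∀ p ∈ missedPoints, p 0 = 1 := by decide
  rintro x hx0 hx
  simp [hmissed x hx] at hx0

theorem eq_proj_zero_of_setOf_subset_twelvePointSet (f : (Fin 4 → ZMod 2) →ₗ[ZMod 2] ZMod 2)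
    (c : ZMod 2) (hf : f ≠ 0) (hsub : {x | f x = c} ⊆ twelvePointSet) :
    f = LinearMap.proj 0 ∧ c = 0 := by
  have hmissed : ∀ p ∈ missedPoints, f p ≠ c := fun p hp hfp => hsub hfp hp
  have hone : f 1 ≠ c := hmissed 1 (by decide)
  have hsingle : ∀ i : Fin 4, i ≠ 0 → f (Pi.single i 1) = 0 := by
    intro i hi
    have hmem : 1 - Pi.single i 1 ∈ missedPoints := by
      revert i
      decide
    exact f.map_eq_zero_of_ne_of_add_ne (hmissed _ hmem) (by rwa [sub_add_cancel])
  have hf_eq : f = f (Pi.single 0 1) • LinearMap.proj 0 := by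
    refine LinearMap.pi_ext' fun i => LinearMap.ext_ring ?_
    fin_cases i <;> simp [hsingle]
  have hcoeff : f (Pi.single 0 1) = 1 :=
    ZMod.eq_of_ne_of_ne_two (c := 0) (fun h => hf (by rw [hf_eq, h, zero_smul])) one_ne_zero
  rw [hcoeff, one_smul] at hf_eq
  subst hf_eq
  exact ⟨rfl, ZMod.eq_of_ne_of_ne_two (c := 1) (Ne.symm hone) zero_ne_one⟩

/-- There is a 12-element subset of `(ZMod 2)⁴` containing exactly one affine
hyperplane. -/
theorem stmt_6 :
    ∃ S : Set (Fin 4 → ZMod 2), S.ncard = 12 ∧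
      ∃! H : Set (Fin 4 → ZMod 2), IsAffineHyperplane H ∧ H ⊆ S := by
  refine ⟨twelvePointSet, ncard_twelvePointSet, {x | x 0 = 0},
    ⟨⟨LinearMap.proj 0, 0, fun h => by simpa using LinearMap.congr_fun h 1, rfl⟩,
      setOf_coord_zero_subset_twelvePointSet⟩, ?_⟩
  rintro H ⟨⟨f, c, hf, rfl⟩, hsub⟩
  obtain ⟨rfl, rfl⟩ := eq_proj_zero_of_setOf_subset_twelvePointSet f c hf hsub
  rfl
end

section
/- Let G be a group having a normal subgroup N such that N is isomorphic to ℤ/3ℤ × ℤ/3ℤ and the quotient G⧸N is isomorphic to ℤ/2ℤ. Then G is isomorphic to one of the following three groups: (ℤ/3 × ℤ/3) × ℤ/2, S₃ × ℤ/3 (S₃ the symmetric group on three letters), or the generalized dihedral group G₁₈ = (ℤ/3 × ℤ/3) ⋊ ℤ/2 in which the nontrivial element of ℤ/2 acts by inversion. -/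
/-!
Since `|N| = 9` and `[G : N] = 2` are coprime, Schur–Zassenhaus splits the
extension: `G ≃* (ℤ/3)² ⋊[φ] ℤ/2`, and `φ` is determined by the involution
`β = φ 1` of the `𝔽₃`-plane `(ℤ/3)²`. In characteristic `≠ 2` an involution is
diagonalisable with eigenvalues `±1`, so `β` is the identity, `-1`, or conjugate
to `(x, y) ↦ (x, -y)`. Conjugate actions give isomorphic semidirect products,
and the three cases give `(ℤ/3)² × ℤ/2`, `G₁₈`, and `(ℤ/3 ⋊ ℤ/2) × ℤ/3 ≃* S₃ × ℤ/3`.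
-/

/-- Inversion as an automorphism of `ℤ/3 × ℤ/3` (written multiplicatively). -/
def invAut : MulAut (Multiplicative (ZMod 3 × ZMod 3)) :=
  MulEquiv.inv (Multiplicative (ZMod 3 × ZMod 3))

lemma invAut_sq : invAut * invAut = 1 := by
  refine MulEquiv.ext fun x => ?_
  exact inv_inv x

/-- The action of `ℤ/2` on `ℤ/3 × ℤ/3` in which the nontrivial element acts by
inversion. -/
def invAction : Multiplicative (ZMod 2) →* MulAut (Multiplicative (ZMod 3 × ZMod 3)) :=
  AddMonoidHom.toMultiplicativeLeft
    (ZMod.lift 2 ⟨zmultiplesHom (Additive (MulAut (Multiplicative (ZMod 3 × ZMod 3))))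
        (Additive.ofMul invAut),
      by
        show ((2 : ℤ) • Additive.ofMul invAut) = 0
        rw [two_zsmul, ← ofMul_mul, invAut_sq]
        rfl⟩)

/-- The generalized dihedral group `G₁₈ = (ℤ/3 × ℤ/3) ⋊ ℤ/2`, the nontrivial
element of `ℤ/2` acting by inversion. -/
abbrev G18 : Type :=
  SemidirectProduct (Multiplicative (ZMod 3 × ZMod 3)) (Multiplicative (ZMod 2)) invAction

open Module Multiplicative

section ZModHom

variable {H : Type*} [Group H] {n : ℕ}

def zmodHomOfPowEqOne (h : H) (hh : h ^ n = 1) : Multiplicative (ZMod n) →* H :=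
  AddMonoidHom.toMultiplicativeLeft
    (ZMod.lift n ⟨zmultiplesHom (Additive H) (Additive.ofMul h),
      by simpa [← ofMul_pow] using congrArg Additive.ofMul hh⟩)

@[simp]
theorem zmodHomOfPowEqOne_ofAdd_one (h : H) (hh : h ^ n = 1) :
    zmodHomOfPowEqOne h hh (ofAdd 1) = h := by
  show Additive.toMul (ZMod.lift n _ 1) = h
  rw [← Int.cast_one, ZMod.lift_coe]
  simp

theorem MonoidHom.ext_zmod_ofAdd_one [NeZero n] {f g : Multiplicative (ZMod n) →* H}
    (hfg : f (ofAdd 1) = g (ofAdd 1)) : f = g := by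
  refine MonoidHom.ext fun x => ?_
  obtain ⟨x, rfl⟩ := ofAdd.surjective x
  rw [← ZMod.natCast_zmod_val x, ← nsmul_one, ofAdd_nsmul, map_pow, map_pow, hfg]

end ZModHom

theorem SemidirectProduct.exists_mulEquiv_of_coprime {G N Q : Type*} [Group G] [Group N]
    [Group Q] (H : Subgroup G) [H.Normal] (hH : (Nat.card H).Coprime H.index) (eN : H ≃* N)
    (eQ : G ⧸ H ≃* Q) : ∃ φ : Q →* MulAut N, Nonempty (G ≃* N ⋊[φ] Q) := by
  obtain ⟨K, hK⟩ := Subgroup.exists_right_complement'_of_coprime hH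
  exact ⟨_, ⟨(mulEquivSubgroup hK).symm.trans
    (congr' eN (hK.symm.QuotientMulEquiv.symm.trans eQ))⟩⟩

theorem exists_linearEquiv_prod_of_involutive {K V : Type*} [Field K] [AddCommGroup V]
    [Module K V] [FiniteDimensional K V] (hV : finrank K V = 2) (h2 : (2 : K) ≠ 0)
    (A : V →ₗ[K] V) (hA : ∀ v, A (A v) = v) (h1 : ∃ v, A v ≠ v)
    (hneg : ∃ v, A v ≠ -v) :
    ∃ γ : (K × K) ≃ₗ[K] V, ∀ p : K × K, A (γ p) = γ (p.1, -p.2) := by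
  obtain ⟨v, hv⟩ := h1
  obtain ⟨v', hv'⟩ := hneg
  set u := v' + A v'
  set w := v - A v
  have hu : A u = u := by simp only [u, map_add, hA, add_comm]
  have hw : A w = -w := by simp only [w, map_sub, hA, neg_sub]
  have hu0 : u ≠ 0 := fun h => hv' (eq_neg_of_add_eq_zero_right h)
  have hw0 : w ≠ 0 := sub_ne_zero.mpr (Ne.symm hv)
  let γ : K × K →ₗ[K] V :=
    (LinearMap.toSpanSingleton K V u).coprod (LinearMap.toSpanSingleton K V w)
  have hγ : ∀ p : K × K, γ p = p.1 • u + p.2 • w := fun p => rfl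
  have hAγ : ∀ p : K × K, A (γ p) = γ (p.1, -p.2) := by
    intro p
    simp only [hγ, map_add, map_smul, hu, hw, smul_neg, neg_smul]
  have hinj : Function.Injective γ := by
    rw [← LinearMap.ker_eq_bot, LinearMap.ker_eq_bot']
    intro p hp
    have hsum : p.1 • u + p.2 • w = 0 := hp
    have hdiff : p.1 • u + (-p.2) • w = 0 := by rw [← hγ (p.1, -p.2), ← hAγ, hp, map_zero]
    have hp1 : p.1 = 0 := by
      have : (2 * p.1) • u = 0 := by linear_combination (norm := module) hsum + hdiff
      simpa [hu0, h2] using this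
    have hp2 : p.2 = 0 := by simpa [hp1, hw0] using hsum
    exact Prod.ext hp1 hp2
  have hsurj : Function.Surjective γ :=
    (LinearMap.injective_iff_surjective_of_finrank_eq_finrank (by simp [hV])).mp hinj
  exact ⟨LinearEquiv.ofBijective γ ⟨hinj, hsurj⟩, hAγ⟩

local notation "M₉" => Multiplicative (ZMod 3 × ZMod 3)
local notation "C₂" => Multiplicative (ZMod 2)

def negSndAut : MulAut M₉ :=
  AddEquiv.toMultiplicative ((AddEquiv.refl (ZMod 3)).prodCongr (AddEquiv.neg (ZMod 3)))

theorem negSndAut_apply (m : M₉) : negSndAut m = ofAdd ((toAdd m).1, -(toAdd m).2) := rfl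

theorem negSndAut_sq : negSndAut ^ 2 = 1 :=
  MulEquiv.ext fun m => by simp [sq, negSndAut_apply]

theorem mulAut_eq_one_or_eq_invAut_or_conj_negSndAut (β : MulAut M₉) (hβ : β ^ 2 = 1) :
    β = 1 ∨ β = invAut ∨ ∃ γ : MulAut M₉, β = MulAut.conj γ negSndAut := by
  let A : (ZMod 3 × ZMod 3) →ₗ[ZMod 3] (ZMod 3 × ZMod 3) :=
    (AddEquiv.toMultiplicative.symm β).toAddMonoidHom.toZModLinearMap 3
  have hAβ : ∀ v, A v = toAdd (β (ofAdd v)) := fun v => rfl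
  have hA : ∀ v, A (A v) = v := fun v => by
    simp only [hAβ, ofAdd_toAdd, ← MulAut.mul_apply, ← sq, hβ, MulAut.one_apply, toAdd_ofAdd]
  by_cases h1 : ∀ v, A v = v
  · exact Or.inl (MulEquiv.ext fun m => congrArg ofAdd (h1 (toAdd m)))
  by_cases hneg : ∀ v, A v = -v
  · exact Or.inr (Or.inl (MulEquiv.ext fun m => congrArg ofAdd (hneg (toAdd m))))
  obtain ⟨γ, hγ⟩ := exists_linearEquiv_prod_of_involutive (by simp) (by decide) A hA
    (not_forall.mp h1) (not_forall.mp hneg)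
  refine Or.inr (Or.inr ⟨AddEquiv.toMultiplicative γ.toAddEquiv, ?_⟩)
  rw [MulAut.conj_apply]
  exact eq_mul_inv_of_mul_eq (MulEquiv.ext fun m => congrArg ofAdd (hγ (toAdd m)))

def negSndAction : C₂ →* MulAut M₉ := zmodHomOfPowEqOne negSndAut negSndAut_sq

def negSndToPermProd (x : M₉ ⋊[negSndAction] C₂) :
    Equiv.Perm (Fin 3) × Multiplicative (ZMod 3) :=
  (finRotate 3 ^ (toAdd x.left).2.val * Equiv.swap 0 1 ^ (toAdd x.right).val,
    ofAdd (toAdd x.left).1)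

theorem negSndToPermProd_mul : ∀ (a b : M₉) (c d : C₂),
    negSndToPermProd (⟨a, c⟩ * ⟨b, d⟩) =
      negSndToPermProd ⟨a, c⟩ * negSndToPermProd ⟨b, d⟩ := by
  decide

theorem negSndToPermProd_injective : ∀ (a b : M₉) (c d : C₂),
    negSndToPermProd ⟨a, c⟩ = negSndToPermProd ⟨b, d⟩ → a = b ∧ c = d := by
  decide

noncomputable def negSndEquivPermProd :
    M₉ ⋊[negSndAction] C₂ ≃* Equiv.Perm (Fin 3) × Multiplicative (ZMod 3) :=
  MulEquiv.ofBijective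
    (MonoidHom.mk' negSndToPermProd fun x y =>
      negSndToPermProd_mul x.left y.left x.right y.right)
    ((Nat.bijective_iff_injective_and_card _).mpr
      ⟨fun x y h => SemidirectProduct.ext_iff.mpr
        (negSndToPermProd_injective x.left y.left x.right y.right h),
        by simp [Nat.card_eq_fintype_card, Fintype.card_perm, Nat.factorial]⟩)

theorem invAction_ofAdd_one : invAction (ofAdd 1) = invAut :=
  zmodHomOfPowEqOne_ofAdd_one invAut (by rw [sq, invAut_sq])

theorem nonempty_semidirectProduct_mulEquiv_trichotomy (φ : C₂ →* MulAut M₉) :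
    Nonempty (M₉ ⋊[φ] C₂ ≃* Multiplicative ((ZMod 3 × ZMod 3) × ZMod 2)) ∨
    Nonempty (M₉ ⋊[φ] C₂ ≃* Equiv.Perm (Fin 3) × Multiplicative (ZMod 3)) ∨
    Nonempty (M₉ ⋊[φ] C₂ ≃* G18) := by
  have hφ : φ (ofAdd 1) ^ 2 = 1 := by
    rw [← map_pow, show (ofAdd 1 : C₂) ^ 2 = 1 from rfl, map_one]
  rcases mulAut_eq_one_or_eq_invAut_or_conj_negSndAut _ hφ with h | h | ⟨γ, h⟩
  · obtain rfl : φ = 1 := MonoidHom.ext_zmod_ofAdd_one h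
    exact Or.inl ⟨SemidirectProduct.mulEquivProd.trans (MulEquiv.prodMultiplicative _ _).symm⟩
  · obtain rfl : φ = invAction := MonoidHom.ext_zmod_ofAdd_one (h.trans invAction_ofAdd_one.symm)
    exact Or.inr (Or.inr ⟨MulEquiv.refl _⟩)
  · obtain rfl : φ = (MulAut.conj γ).toMonoidHom.comp negSndAction :=
      MonoidHom.ext_zmod_ofAdd_one (by simp [h, negSndAction])
    refine Or.inr (Or.inl ⟨(SemidirectProduct.congr γ (MulEquiv.refl _) fun c => ?_).symm.trans
      negSndEquivPermProd⟩)
    refine MulEquiv.ext fun m => ?_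
    simp [MulAut.conj_apply]

/-- Lemma 3.6(3), group-theoretic step: a group which is an extension of `ℤ/2`
by `ℤ/3 × ℤ/3` is isomorphic to `(ℤ/3 × ℤ/3) × ℤ/2`, to `S₃ × ℤ/3`, or to the
generalized dihedral group `G₁₈`. -/
theorem stmt_10 (G : Type*) [Group G] (N : Subgroup G) [N.Normal]
    (hN : Nonempty (N ≃* Multiplicative (ZMod 3 × ZMod 3)))
    (hQ : Nonempty ((G ⧸ N) ≃* Multiplicative (ZMod 2))) :
    Nonempty (G ≃* Multiplicative ((ZMod 3 × ZMod 3) × ZMod 2)) ∨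
    Nonempty (G ≃* Equiv.Perm (Fin 3) × Multiplicative (ZMod 3)) ∨
    Nonempty (G ≃* G18) := by
  obtain ⟨eN⟩ := hN
  obtain ⟨eQ⟩ := hQ
  have hcoprime : (Nat.card N).Coprime N.index := by
    rw [Nat.card_congr eN.toEquiv, Subgroup.index, Nat.card_congr eQ.toEquiv]
    norm_num [Nat.card_eq_fintype_card]
  obtain ⟨φ, ⟨Φ⟩⟩ := SemidirectProduct.exists_mulEquiv_of_coprime N hcoprime eN eQ
  rcases nonempty_semidirectProduct_mulEquiv_trichotomy φ with
    ⟨⟨Ψ⟩⟩ | ⟨⟨Ψ⟩⟩ | ⟨⟨Ψ⟩⟩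
  · exact Or.inl ⟨Φ.trans Ψ⟩
  · exact Or.inr (Or.inl ⟨Φ.trans Ψ⟩)
  · exact Or.inr (Or.inr ⟨Φ.trans Ψ⟩)
end
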